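/- arXiv:2210.15584 — 2 statements merged into one kernel-verified Lean document; each statement's English description precedes it below -/
import Mathlib

section
/- Let b > 0, β > 0 with β ≠ 1, and γ ∈ ℝ be such that λ := -γ·ln b/(β - 1) ≥ 0, and let N be Poisson with mean λ. Then for every n ∈ ℕ the n-th moment of the log-Poisson variable satisfies ∑_{j=0}^∞ (b^γ · β^j)^n · (λ^j/j!) · e^{-λ} = b^{γ(n - (β^n - 1)/(β - 1))}. -/
open Real

/-- The `n`-th moment of the log-Poisson variable `b^γ · β^N`, where `N` is Poisson
with mean `λ = -γ·ln b/(β-1) ≥ 0`, equals `b^(γ(n - (β^n-1)/(β-1)))`. -/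
theorem logPoisson_nth_moment (b β γ : ℝ) (hb : 0 < b) (hβ : 0 < β) (hβ1 : β ≠ 1)
    (lam : ℝ) (hlam : lam = -γ * Real.log b / (β - 1)) (hlam0 : 0 ≤ lam) (n : ℕ) :
    ∑' j : ℕ, (b ^ γ * β ^ j) ^ n * (lam ^ j / (Nat.factorial j : ℝ)) * Real.exp (-lam)
      = b ^ (γ * ((n : ℝ) - (β ^ n - 1) / (β - 1))) := by
  have key : ∑' j : ℕ, (β ^ n * lam) ^ j / (Nat.factorial j : ℝ)
      = Real.exp (β ^ n * lam) := by
    rw [Real.exp_eq_exp_ℝ, NormedSpace.exp_eq_tsum_div]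
  have h1 : ∀ j : ℕ,
      (b ^ γ * β ^ j) ^ n * (lam ^ j / (Nat.factorial j : ℝ)) * Real.exp (-lam)
      = (b ^ γ) ^ n * Real.exp (-lam) * ((β ^ n * lam) ^ j / (Nat.factorial j : ℝ)) := by
    intro j
    rw [mul_pow, mul_pow, ← pow_mul, ← pow_mul, Nat.mul_comm j n, pow_mul]
    ring
  rw [tsum_congr h1, tsum_mul_left, key]
  have hbγ : b ^ γ = Real.exp (Real.log b * γ) := Real.rpow_def_of_pos hb γ
  rw [hbγ, ← Real.exp_nat_mul, ← Real.exp_add, ← Real.exp_add,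
    Real.rpow_def_of_pos hb]
  congr 1
  have hβ1' : β - 1 ≠ 0 := sub_ne_zero.mpr hβ1
  rw [hlam]
  field_simp
  ring
end

section
/- Let b > 0, β > 0 with β ≠ 1, and γ ∈ ℝ be such that λ := -γ·ln b/(β - 1) ≥ 0; let t ≥ 0, c ≥ 0, and d, b₀ ∈ ℝ; and let n ∈ ℕ. Then, with respect to the product of the Poisson distribution with mean λ on ℕ and the Gaussian measure gaussianReal b₀ t on ℝ (modeling an independent log-Poisson factor and geometric Brownian factor), the mixed n-th moment satisfies ∑_{j=0}^∞ ∫_ℝ (b^γ·β^j)^n · exp(n((d - c/2)·t + √c·x)) · (λ^j e^{-λ}/j!) d(gaussianReal b₀ t)(x) = b^{γ(n - (β^n - 1)/(β - 1))} · exp(n·d·t + n·√c·b₀ + (n(n-1)/2)·c·t). -/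
/-!
Since the two factors are independent, the moment splits into a Poisson and a Gaussian part.
The Poisson part is the probability generating function `E[z^N] = exp(λ(z - 1))` at `z = β^n`,
and the choice `λ = -γ ln b/(β - 1)` turns `b^{γn} exp(λ(β^n - 1))` into
`b^{γ(n - (β^n - 1)/(β - 1))}`. The Gaussian part is the moment generating function
`E[exp(s b_t)] = exp(s b₀ + s² t/2)` at `s = n√c`.
-/

open Real NNReal MeasureTheory ProbabilityTheory
open scoped Nat

theorem tsum_pow_mul_poisson_weight (z lam : ℝ) :
    ∑' j : ℕ, z ^ j * (lam ^ j * exp (-lam) / j !) = exp (lam * (z - 1)) := by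
  calc ∑' j : ℕ, z ^ j * (lam ^ j * exp (-lam) / j !)
      = (∑' j : ℕ, (z * lam) ^ j / j !) * exp (-lam) := by
        rw [← _root_.tsum_mul_right]
        congr 1 with j
        ring
    _ = exp (z * lam) * exp (-lam) := by
        rw [exp_eq_exp_ℝ, NormedSpace.exp_eq_tsum_div]
    _ = exp (lam * (z - 1)) := by
        rw [← exp_add]
        ring_nf

theorem integral_exp_add_mul_gaussianReal (μ : ℝ) (v : ℝ≥0) (a s : ℝ) :
    ∫ x, exp (a + s * x) ∂gaussianReal μ v = exp (a + μ * s + v * s ^ 2 / 2) := by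
  have hmgf : ∫ x, exp (s * x) ∂gaussianReal μ v = exp (μ * s + v * s ^ 2 / 2) :=
    congrFun mgf_id_gaussianReal s
  simp only [exp_add, integral_const_mul, hmgf, mul_assoc]

theorem rpow_pow_mul_exp_logPoisson_eq_rpow {b : ℝ} (hb : 0 < b) (γ : ℝ) {β : ℝ} (hβ1 : β ≠ 1)
    (n : ℕ) :
    (b ^ γ) ^ n * exp (-γ * log b / (β - 1) * (β ^ n - 1))
      = b ^ (γ * (n - (β ^ n - 1) / (β - 1))) := by
  have hβ1' : β - 1 ≠ 0 := sub_ne_zero.mpr hβ1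
  rw [rpow_def_of_pos hb, rpow_def_of_pos hb, ← exp_nat_mul, ← exp_add]
  congr 1
  field_simp
  ring

theorem logPoisson_geometric_brownian_mixed_moment_general (b β γ : ℝ) (hb : 0 < b)
    (hβ1 : β ≠ 1) (lam : ℝ) (hlam : lam = -γ * Real.log b / (β - 1))
    (t : ℝ≥0) (c : ℝ) (hc : 0 ≤ c) (d b₀ : ℝ) (n : ℕ) :
    ∑' j : ℕ, ∫ x : ℝ,
        (b ^ γ * β ^ j) ^ n * Real.exp ((n : ℝ) * ((d - c / 2) * (t : ℝ) + Real.sqrt c * x)) *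
          (lam ^ j * Real.exp (-lam) / (Nat.factorial j : ℝ)) ∂(gaussianReal b₀ t)
      = b ^ (γ * ((n : ℝ) - (β ^ n - 1) / (β - 1))) *
          Real.exp ((n : ℝ) * d * (t : ℝ) + (n : ℝ) * Real.sqrt c * b₀ +
            ((n : ℝ) * ((n : ℝ) - 1) / 2) * c * (t : ℝ)) := by
  have hsummand : ∀ j : ℕ, ∫ x : ℝ,
        (b ^ γ * β ^ j) ^ n * exp (n * ((d - c / 2) * t + sqrt c * x)) *
          (lam ^ j * exp (-lam) / j !) ∂(gaussianReal b₀ t)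
      = (β ^ n) ^ j * (lam ^ j * exp (-lam) / j !) * ((b ^ γ) ^ n *
          exp (n * ((d - c / 2) * t) + b₀ * (n * sqrt c) + t * (n * sqrt c) ^ 2 / 2)) := by
    intro j
    rw [← integral_exp_add_mul_gaussianReal, ← integral_const_mul, ← integral_const_mul]
    congr 1 with x
    ring_nf
  rw [tsum_congr hsummand, _root_.tsum_mul_right, tsum_pow_mul_poisson_weight, ← mul_assoc,
    mul_comm (exp _), hlam, rpow_pow_mul_exp_logPoisson_eq_rpow hb γ hβ1]
  congr 2
  rw [mul_pow, sq_sqrt hc]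
  ring

/-- Mixed `n`-th moment of an independent log-Poisson factor `b^γ·β^N`
(`N` Poisson of mean `λ = -γ·ln b/(β-1) ≥ 0`) and geometric Brownian factor
`exp((d - c/2)t + √c·b_t)` (`b_t` Gaussian of mean `b₀` and variance `t`). -/
theorem logPoisson_geometric_brownian_mixed_moment (b β γ : ℝ) (hb : 0 < b)
    (hβ : 0 < β) (hβ1 : β ≠ 1) (lam : ℝ) (hlam : lam = -γ * Real.log b / (β - 1))
    (hlam0 : 0 ≤ lam) (t : ℝ≥0) (c : ℝ) (hc : 0 ≤ c) (d b₀ : ℝ) (n : ℕ) :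
    ∑' j : ℕ, ∫ x : ℝ,
        (b ^ γ * β ^ j) ^ n * Real.exp ((n : ℝ) * ((d - c / 2) * (t : ℝ) + Real.sqrt c * x)) *
          (lam ^ j * Real.exp (-lam) / (Nat.factorial j : ℝ)) ∂(gaussianReal b₀ t)
      = b ^ (γ * ((n : ℝ) - (β ^ n - 1) / (β - 1))) *
          Real.exp ((n : ℝ) * d * (t : ℝ) + (n : ℝ) * Real.sqrt c * b₀ +
            ((n : ℝ) * ((n : ℝ) - 1) / 2) * c * (t : ℝ)) :=
  logPoisson_geometric_brownian_mixed_moment_general b β γ hb hβ1 lam hlam t c hc d b₀ n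
end
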